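/- Let F be a field of characteristic p > 0 and h ∈ F[x] nonzero, with A_h ⊆ A₁ via ŷ = yh. Then A_h is a free module over its center Z(A_h) = F[xᵖ, hᵖyᵖ], with basis {xⁱhʲyʲ : 0 ≤ i, j < p}. -/

import Mathlib

open Polynomial FreeAlgebra

/-- The defining relation of the Weyl algebra: `y * x = x * y + 1`. -/
inductive weylRel (F : Type) [Field F] : FreeAlgebra F (Fin 2) → FreeAlgebra F (Fin 2) → Prop
  | rel : weylRel F (ι F 1 * ι F 0) (ι F 0 * ι F 1 + 1)

/-- The Weyl algebra `A₁` over `F`. -/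
noncomputable abbrev Weyl (F : Type) [Field F] := RingQuot (weylRel F)

/-- The generator `x` of the Weyl algebra. -/
noncomputable def wX (F : Type) [Field F] : Weyl F := RingQuot.mkAlgHom F (weylRel F) (ι F 0)

/-- The generator `y` of the Weyl algebra. -/
noncomputable def wY (F : Type) [Field F] : Weyl F := RingQuot.mkAlgHom F (weylRel F) (ι F 1)

/-- The subalgebra `A_h = F⟨x, yh⟩` of the Weyl algebra. -/
noncomputable def Ahsub (F : Type) [Field F] (h : F[X]) : Subalgebra F (Weyl F) :=
  Algebra.adjoin F {wX F, wY F * aeval (wX F) h}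

namespace WeylAux

variable (F : Type) [Field F]

theorem relXY : wY F * wX F = wX F * wY F + 1 := by
  have := RingQuot.mkAlgHom_rel F (weylRel.rel (F := F))
  simpa only [map_mul, map_add, map_one, wX, wY] using this

variable {F}

theorem commYxpow (n : ℕ) : wY F * wX F ^ n = wX F ^ n * wY F + n • wX F ^ (n - 1) := by
  induction n with
  | zero => simp
  | succ n ih =>
    have : wY F * wX F ^ (n + 1) = (wY F * wX F ^ n) * wX F := by
      rw [mul_assoc, pow_succ]
    rw [this, ih, add_mul, mul_assoc, relXY, smul_mul_assoc]
    cases n with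
    | zero => simp [mul_add]
    | succ m =>
      have h1 : wX F ^ (m + 1 - 1) * wX F = wX F ^ (m + 1) := by
        rw [Nat.add_sub_cancel, ← pow_succ]
      rw [h1, mul_add, ← mul_assoc, ← pow_succ, mul_one, Nat.add_sub_cancel]
      module

theorem commYpowX (n : ℕ) : wY F ^ n * wX F = wX F * wY F ^ n + n • wY F ^ (n - 1) := by
  induction n with
  | zero => simp
  | succ n ih =>
    have : wY F ^ (n + 1) * wX F = wY F * (wY F ^ n * wX F) := by
      rw [← mul_assoc, ← pow_succ']
    rw [this, ih, mul_add, ← mul_assoc, relXY, add_mul, mul_smul_comm]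
    cases n with
    | zero => simp
    | succ m =>
      have h1 : wY F * wY F ^ (m + 1 - 1) = wY F ^ (m + 1) := by
        rw [Nat.add_sub_cancel, ← pow_succ']
      rw [h1, mul_assoc, ← pow_succ', Nat.add_sub_cancel, one_mul]
      module

theorem commYf (g : F[X]) :
    wY F * aeval (wX F) g = aeval (wX F) g * wY F + aeval (wX F) (derivative g) := by
  induction g using Polynomial.induction_on' with
  | add u v hu hv => simp only [map_add, mul_add, add_mul, hu, hv]; abel
  | monomial n a =>
    have : aeval (wX F) (monomial n a) = a • wX F ^ n := by
      simp [Polynomial.aeval_monomial, Algebra.smul_def]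
    rw [this, derivative_monomial, mul_smul_comm, commYxpow, smul_add]
    have : aeval (wX F) (monomial (n - 1) (a * n)) = (a * n) • wX F ^ (n - 1) := by
      simp [Polynomial.aeval_monomial, Algebra.smul_def]
    rw [this, smul_mul_assoc]
    congr 1
    rw [mul_comm a (n : F), mul_smul, ← Nat.cast_smul_eq_nsmul F n (wX F ^ (n-1)), smul_comm]

end WeylAux
set_option linter.unusedSectionVars false
namespace WeylAux
variable {F : Type} [Field F]

theorem adjoin_XY : Algebra.adjoin F {wX F, wY F} = ⊤ := by
  rw [eq_top_iff]
  rintro w -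
  obtain ⟨z, rfl⟩ := RingQuot.mkAlgHom_surjective F (weylRel F) w
  induction z using FreeAlgebra.induction with
  | grade0 r =>
    rw [AlgHom.commutes]
    exact Subalgebra.algebraMap_mem _ r
  | grade1 i =>
    fin_cases i
    · exact Algebra.subset_adjoin (Set.mem_insert _ _)
    · exact Algebra.subset_adjoin (Set.mem_insert_of_mem _ rfl)
  | mul a b ha hb => rw [map_mul]; exact mul_mem ha hb
  | add a b ha hb => rw [map_add]; exact add_mem ha hb

/-- Centrality in the Weyl algebra. -/
def IsCentral (z : Weyl F) : Prop := ∀ w : Weyl F, z * w = w * z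

theorem isCentral_of_gens {z : Weyl F} (hx : z * wX F = wX F * z)
    (hy : z * wY F = wY F * z) : IsCentral z := by
  intro w
  have hw : w ∈ Subalgebra.centralizer F ({z} : Set (Weyl F)) := by
    have : Algebra.adjoin F {wX F, wY F} ≤ Subalgebra.centralizer F ({z} : Set (Weyl F)) := by
      rw [Algebra.adjoin_le_iff]
      rintro u (rfl | rfl)
      · exact Subalgebra.mem_centralizer_iff F |>.mpr (by rintro v rfl; exact hx)
      · exact Subalgebra.mem_centralizer_iff F |>.mpr (by rintro v rfl; exact hy)
    exact this (by rw [adjoin_XY]; trivial)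
  exact Subalgebra.mem_centralizer_iff F |>.mp hw z rfl

theorem IsCentral.mul {a b : Weyl F} (ha : IsCentral a) (hb : IsCentral b) :
    IsCentral (a * b) := fun w => by
  rw [mul_assoc, hb w, ← mul_assoc, ha w, mul_assoc]

theorem IsCentral.pow {a : Weyl F} (ha : IsCentral a) (n : ℕ) : IsCentral (a ^ n) := by
  induction n with
  | zero => intro w; simp
  | succ n ih => rw [pow_succ]; exact ih.mul ha

theorem aeval_comm (g k : F[X]) :
    aeval (wX F) g * aeval (wX F) k = aeval (wX F) k * aeval (wX F) g := by
  rw [← map_mul, ← map_mul, mul_comm]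

theorem aeval_commX (g : F[X]) : aeval (wX F) g * wX F = wX F * aeval (wX F) g := by
  have := aeval_comm (F := F) g X
  simpa using this

theorem isCentral_aeval {g : F[X]} (hg : derivative g = 0) : IsCentral (aeval (wX F) g) := by
  apply isCentral_of_gens (aeval_commX g)
  rw [commYf, hg, map_zero, add_zero]

variable (F)
variable (p : ℕ) [Fact p.Prime] [CharP F p]

theorem nsmul_p (w : Weyl F) : p • w = 0 := by
  rw [← Nat.cast_smul_eq_nsmul F p w, CharP.cast_eq_zero, zero_smul]

theorem isCentral_Ypow_p : IsCentral (wY F ^ p) := by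
  apply isCentral_of_gens
  · rw [commYpowX, nsmul_p, add_zero]
  · rw [← pow_succ, ← pow_succ']

theorem isCentral_Xpow_p : IsCentral (wX F ^ p) := by
  apply isCentral_of_gens
  · rw [← pow_succ, ← pow_succ']
  · have hx : aeval (wX F) (X ^ p : F[X]) = wX F ^ p := by simp
    have hd : derivative (X ^ p : F[X]) = 0 := by
      rw [derivative_pow, derivative_X, mul_one, CharP.cast_eq_zero, map_zero, zero_mul]
    have := commYf (F := F) (X ^ p)
    rw [hd, map_zero, add_zero, hx] at this
    exact this.symm

theorem isCentral_Ypow_of_dvd {b : ℕ} (hb : p ∣ b) : IsCentral (wY F ^ b) := by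
  obtain ⟨c, rfl⟩ := hb
  rw [pow_mul]
  exact (isCentral_Ypow_p F p).pow c

end WeylAux
namespace WeylAux
variable {F : Type} [Field F]

/-- The ambient commutative ring for the faithful representation: `F[t][x]`. -/
abbrev RR (F : Type) [Field F] := Polynomial (Polynomial F)

/-- Derivative in the outer variable, as an `F`-linear endomorphism. -/
noncomputable def DD (F : Type) [Field F] : Module.End F (RR F) :=
  (Polynomial.derivative : RR F →ₗ[Polynomial F] RR F).restrictScalars F

/-- Left multiplication. -/
noncomputable def ML (r : RR F) : Module.End F (RR F) := Algebra.lmul F (RR F) r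

/-- The representation of the Weyl algebra on `F[t][x]`, where `x` acts as
multiplication by the outer variable and `y` as `d/dx + t`. -/
noncomputable def rep (F : Type) [Field F] : Weyl F →ₐ[F] Module.End F (RR F) :=
  RingQuot.liftAlgHom F ⟨FreeAlgebra.lift F ![ML X, DD F + ML (C X)], by
    rintro a b ⟨⟩
    simp only [map_mul, map_add, map_one, FreeAlgebra.lift_ι_apply,
      Matrix.cons_val_zero, Matrix.cons_val_one, Matrix.head_cons]
    apply LinearMap.ext
    intro r
    simp only [Module.End.mul_apply, LinearMap.add_apply, Module.End.one_apply,
      DD, ML, LinearMap.restrictScalars_apply, Algebra.coe_lmul_eq_mul, LinearMap.mul_apply', derivative_mul,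
      derivative_X, one_mul]
    ring⟩

theorem rep_wX : rep F (wX F) = ML (X : RR F) := by
  rw [wX, rep, RingQuot.liftAlgHom_mkAlgHom_apply, FreeAlgebra.lift_ι_apply]
  rfl

theorem rep_wY : rep F (wY F) = DD F + ML (C X : RR F) := by
  rw [wY, rep, RingQuot.liftAlgHom_mkAlgHom_apply, FreeAlgebra.lift_ι_apply]
  rfl

/-- Evaluation of the representation at `1`. -/
noncomputable def eps (F : Type) [Field F] : Weyl F →ₗ[F] RR F where
  toFun z := rep F z 1
  map_add' a b := by rw [map_add]; rfl
  map_smul' c a := by rw [map_smul]; rfl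

theorem eps_apply (z : Weyl F) : eps F z = rep F z 1 := rfl

theorem eps_mul (a b : Weyl F) : eps F (a * b) = rep F a (eps F b) := by
  rw [eps_apply, eps_apply, map_mul, Module.End.mul_apply]

theorem eps_Ypow (b : ℕ) : eps F (wY F ^ b) = C (X ^ b : Polynomial F) := by
  induction b with
  | zero =>
    rw [pow_zero, eps_apply, map_one (rep F), Module.End.one_apply, pow_zero, map_one]
  | succ b ih =>
    have : wY F ^ (b + 1) = wY F * wY F ^ b := pow_succ' _ _
    rw [this, eps_mul, ih, rep_wY]
    simp only [LinearMap.add_apply, DD, ML, LinearMap.restrictScalars_apply,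
      Algebra.coe_lmul_eq_mul, LinearMap.mul_apply', derivative_C, pow_succ, map_mul]
    rw [zero_add, mul_comm]

theorem aeval_X_RR (g : F[X]) :
    aeval (X : RR F) g = g.map (C : F →+* Polynomial F) := by
  induction g using Polynomial.induction_on' with
  | add u v hu hv => rw [map_add, Polynomial.map_add, hu, hv]
  | monomial n a =>
    rw [Polynomial.aeval_monomial, Polynomial.map_monomial, ← C_mul_X_pow_eq_monomial]
    congr 1

theorem eps_gen (g : F[X]) (b : ℕ) :
    eps F (aeval (wX F) g * wY F ^ b) = g.map (C : F →+* Polynomial F) * C (X ^ b) := by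
  rw [eps_mul, eps_Ypow, ← Polynomial.aeval_algHom_apply, rep_wX]
  have h2 : aeval (ML (X : RR F)) g = ML (aeval (X : RR F) g) :=
    Polynomial.aeval_algHom_apply (Algebra.lmul F (RR F)) (X : RR F) g
  rw [h2]
  rw [ML, Algebra.coe_lmul_eq_mul, LinearMap.mul_apply', aeval_X_RR]

/-- Key independence: the monomials `f(x) yᵇ` are independent. -/
theorem KI (s : Finset ℕ) (f : ℕ → F[X])
    (H : (∑ b ∈ s, aeval (wX F) (f b) * wY F ^ b) = 0) : ∀ b ∈ s, f b = 0 := by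
  intro b0 hb0
  have h1 : (∑ b ∈ s, (f b).map (C : F →+* Polynomial F) * C (X ^ b)) = 0 := by
    have := congrArg (eps F) H
    rw [map_sum, map_zero] at this
    simpa only [eps_gen] using this
  ext n
  have h2 : (∑ b ∈ s, C ((f b).coeff n) * (X : Polynomial F) ^ b) = 0 := by
    have := congrArg (fun q : RR F => q.coeff n) h1
    simp only [finset_sum_coeff, Polynomial.coeff_zero] at this ⊢
    rw [← this]
    apply Finset.sum_congr rfl
    intro b _
    rw [coeff_mul_C, Polynomial.coeff_map]
  have h3 : (∑ b ∈ s, C ((f b).coeff n) * (X : Polynomial F) ^ b).coeff b0 = (f b0).coeff n := by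
    rw [finset_sum_coeff]
    rw [Finset.sum_eq_single b0]
    · rw [C_mul_X_pow_eq_monomial, Polynomial.coeff_monomial, if_pos rfl]
    · intro b _ hb
      rw [C_mul_X_pow_eq_monomial, Polynomial.coeff_monomial, if_neg hb]
    · intro hb; exact absurd hb0 hb
  rw [h2] at h3
  simpa using h3.symm

end WeylAux
namespace WeylAux
variable {F : Type} [Field F]

/-- Generators of `A_h` as an `F`-module: `g(x)·yᵇ` with `hᵇ ∣ g`. -/
def Tset (h : F[X]) : Set (Weyl F) :=
  {w | ∃ g b, h ^ b ∣ g ∧ w = aeval (wX F) g * wY F ^ b}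

/-- `A_h` as a span. -/
noncomputable def TT (h : F[X]) : Submodule F (Weyl F) := Submodule.span F (Tset h)

theorem derivative_pow_dvd {h g : F[X]} {m : ℕ} (hd : h ^ m ∣ g) :
    h ^ (m - 1) ∣ derivative g := by
  cases m with
  | zero => rw [Nat.zero_sub, pow_zero]; exact one_dvd _
  | succ k =>
    obtain ⟨q, rfl⟩ := hd
    rw [Nat.succ_sub_one, derivative_mul, derivative_pow, Nat.succ_sub_one]
    refine dvd_add ⟨C ((k+1 : ℕ) : F) * derivative h * q, by ring⟩
      ⟨h * derivative q, by ring⟩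

theorem span_map_mem {M N : Type} [AddCommMonoid M] [AddCommMonoid N]
    [Module F M] [Module F N] {s : Set M} {t : Set N} (f : M →ₗ[F] N)
    (hst : ∀ w ∈ s, f w ∈ Submodule.span F t) {x : M}
    (hx : x ∈ Submodule.span F s) : f x ∈ Submodule.span F t :=
  (Submodule.span_le (p := (Submodule.span F t).comap f)).mpr hst hx

theorem Ycomm (h : F[X]) (b : ℕ) : ∀ (m : ℕ) (g : F[X]), h ^ m ∣ g →
    wY F ^ b * aeval (wX F) g ∈ Submodule.span F
      {w | ∃ u j, j ≤ b ∧ h ^ (m + j - b) ∣ u ∧ w = aeval (wX F) u * wY F ^ j} := by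
  induction b with
  | zero =>
    intro m g hg
    rw [pow_zero, one_mul]
    exact Submodule.subset_span ⟨g, 0, le_refl 0,
      by simpa using hg, by rw [pow_zero, mul_one]⟩
  | succ b ih =>
    intro m g hg
    have key : wY F ^ (b+1) * aeval (wX F) g
        = (wY F ^ b * aeval (wX F) g) * wY F
          + wY F ^ b * aeval (wX F) (derivative g) := by
      calc wY F ^ (b+1) * aeval (wX F) g
          = wY F ^ b * (wY F * aeval (wX F) g) := by rw [pow_succ, mul_assoc]
        _ = wY F ^ b * (aeval (wX F) g * wY F + aeval (wX F) (derivative g)) := by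
            rw [commYf]
        _ = (wY F ^ b * aeval (wX F) g) * wY F
            + wY F ^ b * aeval (wX F) (derivative g) := by
            rw [mul_add, ← mul_assoc]
    rw [key]
    apply Submodule.add_mem
    · refine span_map_mem (LinearMap.mulRight F (wY F)) ?_ (ih m g hg)
      rintro w ⟨u, j, hj, hu, rfl⟩
      apply Submodule.subset_span
      refine ⟨u, j + 1, by omega, ?_, ?_⟩
      · have : m + (j + 1) - (b + 1) = m + j - b := by omega
        rw [this]; exact hu
      · rw [LinearMap.mulRight_apply, mul_assoc, ← pow_succ]
    · have h1 := ih (m - 1) (derivative g) (derivative_pow_dvd hg)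
      refine (Submodule.span_le.mpr ?_) h1
      rintro w ⟨u, j, hj, hu, rfl⟩
      apply Submodule.subset_span
      refine ⟨u, j, by omega, ?_, rfl⟩
      exact dvd_trans (pow_dvd_pow h (by omega : m + j - (b+1) ≤ m - 1 + j - b)) hu

theorem Tmul_gen (h g1 g2 : F[X]) (b c : ℕ) (h1 : h ^ b ∣ g1) (h2 : h ^ c ∣ g2) :
    (aeval (wX F) g1 * wY F ^ b) * (aeval (wX F) g2 * wY F ^ c) ∈ TT h := by
  have e : (aeval (wX F) g1 * wY F ^ b) * (aeval (wX F) g2 * wY F ^ c)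
      = ((LinearMap.mulLeft F (aeval (wX F) g1)).comp (LinearMap.mulRight F (wY F ^ c)))
          (wY F ^ b * aeval (wX F) g2) := by
    rw [LinearMap.comp_apply, LinearMap.mulRight_apply, LinearMap.mulLeft_apply]
    rw [mul_assoc, mul_assoc]
  rw [e]
  refine span_map_mem _ ?_ (Ycomm h b c g2 h2)
  rintro w ⟨u, j, hj, hu, rfl⟩
  apply Submodule.subset_span
  refine ⟨g1 * u, j + c, ?_, ?_⟩
  · refine dvd_trans (pow_dvd_pow h (by omega : j + c ≤ b + (c + j - b))) ?_
    rw [pow_add]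
    exact mul_dvd_mul h1 hu
  · rw [LinearMap.comp_apply, LinearMap.mulRight_apply, LinearMap.mulLeft_apply,
      map_mul, pow_add, mul_assoc, mul_assoc]

theorem TT_mul {h : F[X]} {a b : Weyl F} (ha : a ∈ TT h) (hb : b ∈ TT h) :
    a * b ∈ TT h := by
  have hle : TT h * TT h ≤ TT h := by
    rw [TT, Submodule.span_mul_span]
    apply Submodule.span_le.mpr
    rintro w hw
    rw [Set.mem_mul] at hw
    obtain ⟨w1, hw1, w2, hw2, rfl⟩ := hw
    obtain ⟨g1, b1, hg1, rfl⟩ := hw1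
    obtain ⟨g2, b2, hg2, rfl⟩ := hw2
    exact Tmul_gen h g1 g2 b1 b2 hg1 hg2
  exact hle (Submodule.mul_mem_mul ha hb)

theorem X_mem_Ah (h : F[X]) : wX F ∈ Ahsub F h :=
  Algebra.subset_adjoin (Set.mem_insert _ _)

theorem yH_mem_Ah (h : F[X]) : wY F * aeval (wX F) h ∈ Ahsub F h :=
  Algebra.subset_adjoin (Set.mem_insert_of_mem _ rfl)

theorem aeval_mem_Ah (h g : F[X]) : aeval (wX F) g ∈ Ahsub F h := by
  induction g using Polynomial.induction_on' with
  | add u v hu hv => rw [map_add]; exact add_mem hu hv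
  | monomial n a =>
    rw [Polynomial.aeval_monomial]
    exact mul_mem (Subalgebra.algebraMap_mem _ a) (pow_mem (X_mem_Ah h) n)

theorem Hy_mem_Ah (h : F[X]) : aeval (wX F) h * wY F ∈ Ahsub F h := by
  have e : aeval (wX F) h * wY F
      = wY F * aeval (wX F) h - aeval (wX F) (derivative h) := by
    rw [commYf, add_sub_cancel_right]
  rw [e]
  exact sub_mem (yH_mem_Ah h) (aeval_mem_Ah h _)

theorem HbYb_mem_Ah (h : F[X]) (b : ℕ) :
    aeval (wX F) (h ^ b) * wY F ^ b ∈ Ahsub F h := by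
  induction b with
  | zero => simpa using one_mem _
  | succ b ih =>
    have key : aeval (wX F) (h ^ (b+1)) * wY F ^ (b+1)
        = (aeval (wX F) h * wY F) * (aeval (wX F) (h ^ b) * wY F ^ b)
          - aeval (wX F) (C ((b : ℕ) : F) * derivative h)
            * (aeval (wX F) (h ^ b) * wY F ^ b) := by
      have e1 : wY F * aeval (wX F) (h ^ b)
          = aeval (wX F) (h ^ b) * wY F + aeval (wX F) (derivative (h ^ b)) := commYf _
      have e2 : (aeval (wX F) h * wY F) * (aeval (wX F) (h ^ b) * wY F ^ b)
          = aeval (wX F) (h ^ (b+1)) * wY F ^ (b+1)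
            + aeval (wX F) (h * derivative (h ^ b)) * wY F ^ b := by
        calc (aeval (wX F) h * wY F) * (aeval (wX F) (h ^ b) * wY F ^ b)
            = aeval (wX F) h * ((wY F * aeval (wX F) (h ^ b)) * wY F ^ b) := by
              rw [mul_assoc, mul_assoc]
          _ = aeval (wX F) h * ((aeval (wX F) (h ^ b) * wY F
                + aeval (wX F) (derivative (h ^ b))) * wY F ^ b) := by rw [e1]
          _ = aeval (wX F) (h ^ (b+1)) * wY F ^ (b+1)
              + aeval (wX F) (h * derivative (h ^ b)) * wY F ^ b := by
              rw [add_mul, mul_add, pow_succ h, pow_succ', map_mul, map_mul,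
                aeval_comm (h ^ b) h]
              noncomm_ring
      have e3 : h * derivative (h ^ b) = (C ((b : ℕ) : F) * derivative h) * h ^ b := by
        cases b with
        | zero => simp
        | succ k =>
          rw [derivative_pow, Nat.succ_sub_one]
          push_cast
          ring
      rw [e2, e3, map_mul]
      noncomm_ring
    rw [key]
    exact sub_mem (mul_mem (Hy_mem_Ah h) ih) (mul_mem (aeval_mem_Ah h _) ih)

end WeylAux
namespace WeylAux
variable {F : Type} [Field F]

theorem T_le_Ah (h : F[X]) : TT h ≤ Subalgebra.toSubmodule (Ahsub F h) := by
  apply Submodule.span_le.mpr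
  rintro w ⟨g, b, ⟨q, rfl⟩, rfl⟩
  have e : aeval (wX F) (h ^ b * q) * wY F ^ b
      = aeval (wX F) q * (aeval (wX F) (h ^ b) * wY F ^ b) := by
    rw [map_mul, aeval_comm, mul_assoc]
  rw [e]
  exact Subalgebra.mul_mem _ (aeval_mem_Ah h q) (HbYb_mem_Ah h b)

theorem Ah_le_T (h : F[X]) : Subalgebra.toSubmodule (Ahsub F h) ≤ TT h := by
  intro a ha
  induction ha using Algebra.adjoin_induction with
  | mem w hw =>
    rcases hw with rfl | rfl
    · apply Submodule.subset_span
      exact ⟨X, 0, by simp, by rw [pow_zero, mul_one, Polynomial.aeval_X]⟩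
    · have e : wY F * aeval (wX F) h
          = aeval (wX F) h * wY F ^ 1 + aeval (wX F) (derivative h) * wY F ^ 0 := by
        rw [pow_one, pow_zero, mul_one, commYf]
      rw [e]
      exact Submodule.add_mem _
        (Submodule.subset_span ⟨h, 1, by rw [pow_one], rfl⟩)
        (Submodule.subset_span ⟨derivative h, 0, one_dvd _, rfl⟩)
  | algebraMap r =>
    apply Submodule.subset_span
    exact ⟨C r, 0, one_dvd _, by rw [pow_zero, mul_one, Polynomial.aeval_C]⟩
  | add u v _ _ hu hv => exact Submodule.add_mem _ hu hv
  | mul u v _ _ hu hv => exact TT_mul hu hv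

theorem mem_Ah_iff (h : F[X]) (a : Weyl F) : a ∈ Ahsub F h ↔ a ∈ TT h :=
  ⟨fun ha => Ah_le_T h ha, fun ha => T_le_Ah h ha⟩

/-- Normal form for elements of `A_h`. -/
theorem normal_form {h : F[X]} {a : Weyl F} (ha : a ∈ Ahsub F h) :
    ∃ (N : ℕ) (f : ℕ → F[X]), (∀ b, h ^ b ∣ f b) ∧
      a = ∑ b ∈ Finset.range N, aeval (wX F) (f b) * wY F ^ b := by
  have ha' : a ∈ TT h := (mem_Ah_iff h a).mp ha
  clear ha
  induction ha' using Submodule.span_induction with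
  | mem w hw =>
    obtain ⟨g, b, hg, rfl⟩ := hw
    refine ⟨b + 1, fun b' => if b' = b then g else 0, ?_, ?_⟩
    · intro b'
      by_cases hb : b' = b
      · subst hb; simpa using hg
      · simp [hb]
    · symm
      rw [Finset.sum_eq_single b]
      · simp
      · intro c _ hc; simp [hc]
      · intro hb; exact absurd (Finset.mem_range.mpr (Nat.lt_succ_self b)) hb
  | zero =>
    exact ⟨0, fun _ => 0, fun b => dvd_zero _, by simp⟩
  | add u v _ _ hu hv =>
    obtain ⟨N1, f1, hd1, rfl⟩ := hu
    obtain ⟨N2, f2, hd2, rfl⟩ := hv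
    refine ⟨max N1 N2,
      fun b => (if b < N1 then f1 b else 0) + (if b < N2 then f2 b else 0), ?_, ?_⟩
    · intro b
      exact dvd_add (by split <;> [exact hd1 b; exact dvd_zero _])
        (by split <;> [exact hd2 b; exact dvd_zero _])
    · have s1 : ∀ (N1 N2 : ℕ) (f1 : ℕ → F[X]), N1 ≤ N2 →
          (∑ b ∈ Finset.range N1, aeval (wX F) (f1 b) * wY F ^ b)
          = ∑ b ∈ Finset.range N2, aeval (wX F) (if b < N1 then f1 b else 0) * wY F ^ b := by
        intro N1 N2 f1 hN
        calc (∑ b ∈ Finset.range N1, aeval (wX F) (f1 b) * wY F ^ b)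
            = ∑ b ∈ Finset.range N1,
                aeval (wX F) (if b < N1 then f1 b else 0) * wY F ^ b :=
              Finset.sum_congr rfl fun b hb => by
                rw [if_pos (Finset.mem_range.mp hb)]
          _ = ∑ b ∈ Finset.range N2,
                aeval (wX F) (if b < N1 then f1 b else 0) * wY F ^ b := by
              apply Finset.sum_subset (Finset.range_subset_range.mpr hN)
              intro b _ hb
              rw [if_neg (by simpa using hb), map_zero, zero_mul]
      rw [s1 N1 (max N1 N2) f1 (le_max_left _ _), s1 N2 (max N1 N2) f2 (le_max_right _ _),
        ← Finset.sum_add_distrib]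
      exact Finset.sum_congr rfl fun b hb => by rw [map_add, add_mul]
  | smul c u _ hu =>
    obtain ⟨N, f, hd, rfl⟩ := hu
    refine ⟨N, fun b => c • f b, ?_, ?_⟩
    · intro b
      show h ^ b ∣ c • f b
      rw [Polynomial.smul_eq_C_mul]
      exact Dvd.dvd.mul_left (hd b) _
    · rw [Finset.smul_sum]
      exact Finset.sum_congr rfl fun b hb => by rw [map_smul, smul_mul_assoc]

end WeylAux
namespace WeylAux
variable {F : Type} [Field F] (p : ℕ) [Fact p.Prime] [CharP F p]

theorem coeff_eq_zero_of_derivative_zero {g : F[X]} (hg : derivative g = 0)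
    {n : ℕ} (hn : ¬ p ∣ n) : g.coeff n = 0 := by
  cases n with
  | zero => exact absurd (dvd_zero p) hn
  | succ m =>
    have h0 := congrArg (fun q : F[X] => Polynomial.coeff q m) hg
    simp only [Polynomial.coeff_derivative, Polynomial.coeff_zero] at h0
    rcases mul_eq_zero.mp h0 with h1 | h2
    · exact h1
    · exfalso
      apply hn
      have hc : ((m + 1 : ℕ) : F) = 0 := by exact_mod_cast h2
      exact (CharP.cast_eq_zero_iff F p _).mp hc

theorem residue_indep (w : Fin p → F[X]) (hw : ∀ i, derivative (w i) = 0)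
    (hsum : (∑ i : Fin p, w i * X ^ (i : ℕ)) = 0) : ∀ i, w i = 0 := by
  have hp : 0 < p := (Fact.out : p.Prime).pos
  intro i0
  ext n
  rw [Polynomial.coeff_zero]
  by_cases hdvd : p ∣ n
  case neg => exact coeff_eq_zero_of_derivative_zero p (hw i0) hdvd
  case pos =>
    have hN := congrArg (fun q : F[X] => Polynomial.coeff q (n + (i0 : ℕ))) hsum
    simp only [finset_sum_coeff, Polynomial.coeff_zero] at hN
    rw [Finset.sum_eq_single i0] at hN
    · rw [Polynomial.coeff_mul_X_pow', if_pos (Nat.le_add_left _ _),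
        Nat.add_sub_cancel] at hN
      exact hN
    · intro i _ hi
      rw [Polynomial.coeff_mul_X_pow']
      split
      case isTrue hle =>
        apply coeff_eq_zero_of_derivative_zero p (hw i)
        intro hdd
        set m := n + (i0 : ℕ) - (i : ℕ) with hm
        have heq : m + (i : ℕ) = n + (i0 : ℕ) := by omega
        have e1 : (m + (i : ℕ)) % p = (n + (i0 : ℕ)) % p := by rw [heq]
        rw [Nat.add_mod, Nat.add_mod n, (Nat.mod_eq_zero_of_dvd hdd : m % p = 0),
          (Nat.mod_eq_zero_of_dvd hdvd : n % p = 0)] at e1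
        simp only [zero_add] at e1
        rw [Nat.mod_mod_of_dvd _ dvd_rfl, Nat.mod_mod_of_dvd _ dvd_rfl,
          Nat.mod_eq_of_lt i.isLt, Nat.mod_eq_of_lt i0.isLt] at e1
        exact hi (Fin.ext e1)
      case isFalse => rfl
    · intro habs; exact absurd (Finset.mem_univ _) habs

theorem poly_decomp (u : F[X]) : ∃ w : Fin p → F[X],
    (∀ i, derivative (w i) = 0) ∧ u = ∑ i : Fin p, w i * X ^ (i : ℕ) := by
  have hp : 0 < p := (Fact.out : p.Prime).pos
  induction u using Polynomial.induction_on' with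
  | add q r hq hr =>
    obtain ⟨w1, hw1, rfl⟩ := hq
    obtain ⟨w2, hw2, rfl⟩ := hr
    exact ⟨fun i => w1 i + w2 i,
      fun i => by rw [derivative_add, hw1, hw2, add_zero],
      by rw [← Finset.sum_add_distrib]
         exact Finset.sum_congr rfl fun i _ => by rw [add_mul]⟩
  | monomial n a =>
    refine ⟨fun i => if (i : ℕ) = n % p then monomial (p * (n / p)) a else 0, ?_, ?_⟩
    · intro i
      dsimp only
      split
      · rw [derivative_monomial]
        have hz : ((p * (n / p) : ℕ) : F) = 0 := by
          rw [Nat.cast_mul, CharP.cast_eq_zero, zero_mul]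
        rw [hz, mul_zero, monomial_zero_right]
      · exact derivative_zero
    · rw [Finset.sum_eq_single (⟨n % p, Nat.mod_lt n hp⟩ : Fin p)]
      · dsimp only
        rw [if_pos rfl, monomial_mul_X_pow, Nat.div_add_mod]
      · intro i _ hi
        dsimp only
        rw [if_neg (fun hc => hi (Fin.ext (by simpa using hc))), zero_mul]
      · intro habs; exact absurd (Finset.mem_univ _) habs

end WeylAux
namespace WeylAux
variable {F : Type} [Field F] (p : ℕ) [Fact p.Prime] [CharP F p]

theorem IsCentral.zero : IsCentral (0 : Weyl F) := fun w => by simp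

theorem central_swap {z : Weyl F} (hz : IsCentral z) (a b : Weyl F) :
    z * (a * b) = a * (z * b) := by
  rw [← mul_assoc, hz a, mul_assoc]

theorem isCentral_aeval_pow_p (h : F[X]) : IsCentral (aeval (wX F) (h ^ p)) :=
  isCentral_aeval (by
    rw [derivative_pow, CharP.cast_eq_zero, map_zero, zero_mul, zero_mul])

theorem exists_decomp_gen (h g : F[X]) (b : ℕ) (hdvd : h ^ b ∣ g) :
    ∃ z : Fin p × Fin p → Weyl F, (∀ ij, z ij ∈ Ahsub F h ∧ IsCentral (z ij)) ∧
      aeval (wX F) g * wY F ^ b =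
        ∑ ij : Fin p × Fin p, z ij *
          (wX F ^ (ij.1 : ℕ) * (aeval (wX F) h ^ (ij.2 : ℕ) * wY F ^ (ij.2 : ℕ))) := by
  have hp : 0 < p := (Fact.out : p.Prime).pos
  obtain ⟨q, rfl⟩ := hdvd
  obtain ⟨w, hw, hq⟩ := poly_decomp p q
  set B := b / p with hB
  set r := b % p with hr
  have hrp : r < p := Nat.mod_lt _ hp
  have hbe : p * B + r = b := Nat.div_add_mod b p
  have cenH : IsCentral (aeval (wX F) (h ^ p)) := isCentral_aeval_pow_p p h
  have cenY : IsCentral (wY F ^ p) := isCentral_Ypow_p F p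
  set YB : Weyl F := (wY F ^ p) ^ B with hYB
  have cenYB : IsCentral YB := cenY.pow B
  have cenHB : IsCentral (aeval (wX F) ((h ^ p) ^ B)) :=
    isCentral_aeval (by simp [derivative_pow, CharP.cast_eq_zero])
  set zc : Weyl F := (aeval (wX F) (h ^ p) * wY F ^ p) ^ B with hzc
  have zc_eq : zc = aeval (wX F) ((h ^ p) ^ B) * YB := by
    rw [hzc, hYB, Commute.mul_pow (cenH (wY F ^ p)), ← map_pow]
  have zc_mem : zc ∈ Ahsub F h := pow_mem (HbYb_mem_Ah h p) B
  have cenzc : IsCentral zc := by rw [zc_eq]; exact cenHB.mul cenYB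
  refine ⟨fun ij => if ij.2 = ⟨r, hrp⟩ then aeval (wX F) (w ij.1) * zc else 0, ?_, ?_⟩
  · intro ij
    dsimp only
    by_cases hj : ij.2 = ⟨r, hrp⟩
    · rw [if_pos hj]
      exact ⟨mul_mem (aeval_mem_Ah h _) zc_mem,
        (isCentral_aeval (hw ij.1)).mul cenzc⟩
    · rw [if_neg hj]
      exact ⟨Subalgebra.zero_mem _, IsCentral.zero⟩
  · rw [Fintype.sum_prod_type]
    have inner : ∀ i : Fin p,
        (∑ j : Fin p, (if (i, j).2 = ⟨r, hrp⟩ then aeval (wX F) (w (i, j).1) * zc else 0) *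
          (wX F ^ ((i, j).1 : ℕ) *
            (aeval (wX F) h ^ ((i, j).2 : ℕ) * wY F ^ ((i, j).2 : ℕ))))
        = (aeval (wX F) (w i) * zc) *
            (wX F ^ (i : ℕ) * (aeval (wX F) h ^ r * wY F ^ r)) := by
      intro i
      rw [Finset.sum_eq_single (⟨r, hrp⟩ : Fin p)]
      · dsimp only
        rw [if_pos rfl]
      · intro j _ hj
        dsimp only
        rw [if_neg hj, zero_mul]
      · intro habs; exact absurd (Finset.mem_univ _) habs
    rw [Finset.sum_congr rfl fun i _ => inner i]
    have lhs_eq : aeval (wX F) (h ^ b * q) * wY F ^ b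
        = ∑ i : Fin p, aeval (wX F) (h ^ b * (w i * X ^ (i : ℕ))) * wY F ^ b := by
      rw [hq, Finset.mul_sum, map_sum, Finset.sum_mul]
    rw [lhs_eq]
    refine Finset.sum_congr rfl fun i _ => ?_
    have yb : wY F ^ b = YB * wY F ^ r := by rw [hYB, ← pow_mul, ← pow_add, hbe]
    have xi : wX F ^ (i : ℕ) = aeval (wX F) ((X : F[X]) ^ (i : ℕ)) := by
      rw [map_pow, Polynomial.aeval_X]
    have hr' : aeval (wX F) h ^ r = aeval (wX F) (h ^ r) := (map_pow _ _ _).symm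
    rw [yb, xi, hr', zc_eq]
    have poly : h ^ b * (w i * X ^ (i : ℕ))
        = (w i * (h ^ p) ^ B) * ((X : F[X]) ^ (i : ℕ) * h ^ r) := by
      rw [← hbe, pow_add, pow_mul]; ring
    rw [poly, map_mul, mul_assoc]
    have c1 : YB * (aeval (wX F) ((X : F[X]) ^ (i : ℕ)) * (aeval (wX F) (h ^ r) * wY F ^ r))
        = aeval (wX F) ((X : F[X]) ^ (i : ℕ) * h ^ r) * (YB * wY F ^ r) := by
      rw [central_swap cenYB, central_swap cenYB (aeval (wX F) (h ^ r)), ← mul_assoc,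
        ← map_mul]
    conv_rhs => rw [← mul_assoc (aeval (wX F) (w i)) (aeval (wX F) ((h ^ p) ^ B)) YB,
      ← map_mul]
    rw [mul_assoc (aeval (wX F) (w i * (h ^ p) ^ B)) YB, c1, ← mul_assoc, ← mul_assoc]

theorem exists_decomp (h : F[X]) {a : Weyl F} (ha : a ∈ Ahsub F h) :
    ∃ z : Fin p × Fin p → Weyl F, (∀ ij, z ij ∈ Ahsub F h ∧ IsCentral (z ij)) ∧
      a = ∑ ij : Fin p × Fin p, z ij *
        (wX F ^ (ij.1 : ℕ) * (aeval (wX F) h ^ (ij.2 : ℕ) * wY F ^ (ij.2 : ℕ))) := by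
  obtain ⟨N, f, hd, rfl⟩ := normal_form ha
  choose z hz hsum using fun b : ℕ => exists_decomp_gen p h (f b) b (hd b)
  refine ⟨fun ij => ∑ b ∈ Finset.range N, z b ij, fun ij => ⟨?_, ?_⟩, ?_⟩
  · exact Subalgebra.sum_mem _ fun b _ => (hz b ij).1
  · intro v
    rw [Finset.sum_mul, Finset.mul_sum]
    exact Finset.sum_congr rfl fun b _ => (hz b ij).2 v
  · rw [Finset.sum_congr rfl fun b (hb : b ∈ Finset.range N) => hsum b, Finset.sum_comm]
    exact Finset.sum_congr rfl fun ij _ => by rw [Finset.sum_mul]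

end WeylAux
namespace WeylAux
variable {F : Type} [Field F] (p : ℕ) [Fact p.Prime] [CharP F p]

theorem comm_x_term (b : ℕ) (f1 : F[X]) :
    (aeval (wX F) f1 * wY F ^ b) * wX F - wX F * (aeval (wX F) f1 * wY F ^ b)
    = aeval (wX F) (C ((b : ℕ) : F) * f1) * wY F ^ (b - 1) := by
  rw [mul_assoc, commYpowX, mul_add, ← mul_assoc, aeval_commX, mul_assoc,
    add_sub_cancel_left, mul_smul_comm, map_mul, Polynomial.aeval_C,
    ← Algebra.smul_def, smul_mul_assoc, ← Nat.cast_smul_eq_nsmul F b]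

theorem comm_yH_term (h f1 : F[X]) {b : ℕ} (hb : p ∣ b) :
    (aeval (wX F) f1 * wY F ^ b) * (wY F * aeval (wX F) h)
    - (wY F * aeval (wX F) h) * (aeval (wX F) f1 * wY F ^ b)
    = - (aeval (wX F) (h * derivative f1) * wY F ^ b) := by
  have cen := isCentral_Ypow_of_dvd F p hb
  have e1 : (aeval (wX F) f1 * wY F ^ b) * (wY F * aeval (wX F) h)
      = aeval (wX F) (f1 * h) * (wY F * wY F ^ b)
        + aeval (wX F) (f1 * derivative h) * wY F ^ b := by
    rw [mul_assoc, cen (wY F * aeval (wX F) h), commYf h, add_mul, mul_add,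
      map_mul, map_mul]
    noncomm_ring
  have e2 : (wY F * aeval (wX F) h) * (aeval (wX F) f1 * wY F ^ b)
      = aeval (wX F) (f1 * h) * (wY F * wY F ^ b)
        + (aeval (wX F) (h * derivative f1)
            + aeval (wX F) (f1 * derivative h)) * wY F ^ b := by
    rw [commYf h, add_mul, mul_assoc (aeval (wX F) h) (wY F), ← mul_assoc (wY F),
      commYf f1, add_mul, map_mul, map_mul, map_mul, mul_add,
      mul_assoc (aeval (wX F) f1) (wY F) (wY F ^ b),
      ← mul_assoc (aeval (wX F) h) (aeval (wX F) f1), aeval_comm h f1,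
      ← mul_assoc (aeval (wX F) (derivative h)) (aeval (wX F) f1),
      aeval_comm (derivative h) f1]
    noncomm_ring
  rw [e1, e2]
  noncomm_ring

theorem central_struct (h : F[X]) (hh : h ≠ 0) {d : Weyl F} (hd : d ∈ Ahsub F h)
    (hdx : d * wX F = wX F * d)
    (hdyh : d * (wY F * aeval (wX F) h) = (wY F * aeval (wX F) h) * d) :
    ∃ (N : ℕ) (f : ℕ → F[X]),
      (∀ b, f b ≠ 0 → p ∣ b ∧ derivative (f b) = 0) ∧ (∀ b, N ≤ b → f b = 0) ∧
      d = ∑ b ∈ Finset.range N, aeval (wX F) (f b) * wY F ^ b := by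
  classical
  obtain ⟨N, f0, _, rfl⟩ := normal_form hd
  set D := ∑ b ∈ Finset.range N, aeval (wX F) (f0 b) * wY F ^ b with hD
  -- Step 1 : commutation with x kills the non-multiples of p
  have sum1 : ∑ b ∈ Finset.range N,
      aeval (wX F) (C ((b : ℕ) : F) * f0 b) * wY F ^ (b - 1) = 0 := by
    have : ∑ b ∈ Finset.range N,
        ((aeval (wX F) (f0 b) * wY F ^ b) * wX F
          - wX F * (aeval (wX F) (f0 b) * wY F ^ b)) = 0 := by
      rw [Finset.sum_sub_distrib, ← Finset.sum_mul, ← Finset.mul_sum, ← hD,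
        sub_eq_zero]
      exact hdx
    rw [← this]
    exact Finset.sum_congr rfl fun b _ => (comm_x_term b (f0 b)).symm
  have hvanish : ∀ b, ¬ p ∣ b → b < N → f0 b = 0 := by
    intro b hpb hbN
    cases N with
    | zero => omega
    | succ N' =>
      rw [Finset.sum_range_succ'] at sum1
      have h00 : aeval (wX F) (C ((0 : ℕ) : F) * f0 0) * wY F ^ (0 - 1) = 0 := by
        simp
      rw [h00, add_zero] at sum1
      have hb1 : 1 ≤ b := by
        rcases Nat.eq_zero_or_pos b with rfl | hb
        · exact absurd (dvd_zero p) hpb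
        · exact hb
      have := KI (Finset.range N') (fun c => C (((c + 1 : ℕ) : F)) * f0 (c + 1))
        (by
          rw [← sum1]
          exact (Finset.sum_congr rfl fun c _ => by
            rw [Nat.add_sub_cancel]).symm)
        (b - 1) (Finset.mem_range.mpr (by omega))
      have hb' : b - 1 + 1 = b := by omega
      rw [hb'] at this
      have hcast : ((b : ℕ) : F) ≠ 0 := fun hc =>
        hpb ((CharP.cast_eq_zero_iff F p b).mp hc)
      have := mul_eq_zero.mp this
      rcases this with hC | hf
      · exact absurd (by
          have := Polynomial.C_eq_zero.mp hC
          exact this) hcast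
      · exact hf
  -- Step 2 : restrict to multiples of p
  set f1 : ℕ → F[X] := fun b => if p ∣ b ∧ b < N then f0 b else 0 with hf1
  have hDe : D = ∑ b ∈ Finset.range N, aeval (wX F) (f1 b) * wY F ^ b := by
    rw [hD]
    refine Finset.sum_congr rfl fun b hb => ?_
    by_cases hpb : p ∣ b
    · rw [hf1]
      dsimp only
      rw [if_pos ⟨hpb, Finset.mem_range.mp hb⟩]
    · rw [hvanish b hpb (Finset.mem_range.mp hb), hf1]
      dsimp only
      rw [if_neg (fun hc => hpb hc.1)]
  -- Step 3 : commutation with yh kills derivatives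
  have sum2 : ∑ b ∈ Finset.range N,
      aeval (wX F) (h * derivative (f1 b)) * wY F ^ b = 0 := by
    rw [← neg_eq_zero, ← Finset.sum_neg_distrib]
    have : ∑ b ∈ Finset.range N,
        ((aeval (wX F) (f1 b) * wY F ^ b) * (wY F * aeval (wX F) h)
          - (wY F * aeval (wX F) h) * (aeval (wX F) (f1 b) * wY F ^ b)) = 0 := by
      rw [Finset.sum_sub_distrib, ← Finset.sum_mul, ← Finset.mul_sum, ← hDe,
        sub_eq_zero]
      exact hdyh
    rw [← this]
    refine Finset.sum_congr rfl fun b _ => ?_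
    by_cases hpb : p ∣ b
    · exact (comm_yH_term p h (f1 b) hpb).symm
    · have : f1 b = 0 := by rw [hf1]; simp [hpb]
      rw [this]
      simp
  have hder : ∀ b, b < N → derivative (f1 b) = 0 := by
    intro b hbN
    have := KI (Finset.range N) (fun b => h * derivative (f1 b)) sum2 b
      (Finset.mem_range.mpr hbN)
    rcases mul_eq_zero.mp this with h1 | h2
    · exact absurd h1 hh
    · exact h2
  refine ⟨N, f1, ?_, ?_, hDe⟩
  · intro b hfb
    have hcond : p ∣ b ∧ b < N := by
      by_contra hc
      exact hfb (by rw [hf1]; simp [hc])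
    exact ⟨hcond.1, hder b hcond.2⟩
  · intro b hNb
    rw [hf1]
    dsimp only
    rw [if_neg (fun hc => absurd hc.2 (by omega))]

end WeylAux
namespace WeylAux
variable {F : Type} [Field F] (p : ℕ) [Fact p.Prime] [CharP F p]

theorem term_shift (h f : F[X]) (i j b : ℕ) (hb : p ∣ b) :
    (aeval (wX F) f * wY F ^ b) * (wX F ^ i * (aeval (wX F) h ^ j * wY F ^ j))
    = aeval (wX F) (f * X ^ i * h ^ j) * wY F ^ (b + j) := by
  have cen := isCentral_Ypow_of_dvd F p hb
  have xi : wX F ^ i = aeval (wX F) ((X : F[X]) ^ i) := by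
    rw [map_pow, Polynomial.aeval_X]
  have hj : aeval (wX F) h ^ j = aeval (wX F) (h ^ j) := (map_pow _ _ _).symm
  rw [xi, hj, mul_assoc,
    cen (aeval (wX F) ((X : F[X]) ^ i) * (aeval (wX F) (h ^ j) * wY F ^ j)),
    map_mul, map_mul, Nat.add_comm b j, pow_add]
  noncomm_ring

theorem mod_eq_helper {j j0 b0 m : ℕ} (hj : j < p) (hj0 : j0 < p)
    (hm : m = b0 + j0) (hb : p ∣ b0) (hjm : j ≤ m) (hdd : p ∣ (m - j)) : j = j0 := by
  obtain ⟨a, ha⟩ := hb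
  obtain ⟨c, hc⟩ := hdd
  have he : p * c + j = p * a + j0 := by omega
  have h1 : j % p = j0 % p := by
    have e1 : (p * c + j) % p = (p * a + j0) % p := by rw [he]
    rwa [Nat.mul_add_mod, Nat.mul_add_mod] at e1
  rwa [Nat.mod_eq_of_lt hj, Nat.mod_eq_of_lt hj0] at h1

theorem unique_zero (h : F[X]) (hh : h ≠ 0) (d : Fin p × Fin p → Weyl F)
    (hmem : ∀ ij, d ij ∈ Ahsub F h)
    (hcen : ∀ ij, ∀ v ∈ Ahsub F h, d ij * v = v * d ij)
    (hsum : ∑ ij : Fin p × Fin p, d ij *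
        (wX F ^ (ij.1 : ℕ) * (aeval (wX F) h ^ (ij.2 : ℕ) * wY F ^ (ij.2 : ℕ))) = 0) :
    ∀ ij, d ij = 0 := by
  classical
  have hp : 0 < p := (Fact.out : p.Prime).pos
  have hstruct := fun ij => central_struct p h hh (hmem ij)
    (hcen ij (wX F) (X_mem_Ah h)) (hcen ij _ (yH_mem_Ah h))
  choose N f hprop hvan heq using hstruct
  set Nm := Finset.univ.sup N with hNm
  have hNle : ∀ ij, N ij ≤ Nm := fun ij => Finset.le_sup (Finset.mem_univ ij)
  have heq' : ∀ ij, d ij = ∑ b ∈ Finset.range Nm, aeval (wX F) (f ij b) * wY F ^ b := by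
    intro ij
    rw [heq ij]
    apply Finset.sum_subset (Finset.range_subset_range.mpr (hNle ij))
    intro b _ hb
    rw [hvan ij b (by simpa using hb), map_zero, zero_mul]
  set G : ℕ → F[X] := fun m => ∑ ij : Fin p × Fin p,
      (if (ij.2 : ℕ) ≤ m ∧ m - (ij.2 : ℕ) < Nm then
        f ij (m - (ij.2 : ℕ)) * X ^ (ij.1 : ℕ) * h ^ (ij.2 : ℕ) else 0) with hG
  -- the inner rearrangement, for each pair
  have inner : ∀ ij : Fin p × Fin p,
      (∑ m ∈ Finset.range (Nm + p),
        (if (ij.2 : ℕ) ≤ m ∧ m - (ij.2 : ℕ) < Nm then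
          aeval (wX F) (f ij (m - (ij.2 : ℕ)) * X ^ (ij.1 : ℕ) * h ^ (ij.2 : ℕ))
            * wY F ^ m else 0))
      = d ij * (wX F ^ (ij.1 : ℕ) * (aeval (wX F) h ^ (ij.2 : ℕ) * wY F ^ (ij.2 : ℕ))) := by
    rintro ⟨i, j⟩
    dsimp only
    have step1 : (∑ m ∈ Finset.range (Nm + p),
        (if (j : ℕ) ≤ m ∧ m - (j : ℕ) < Nm then
          aeval (wX F) (f (i, j) (m - (j : ℕ)) * X ^ (i : ℕ)
            * h ^ (j : ℕ)) * wY F ^ m else 0))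
        = ∑ m ∈ (Finset.range Nm).image (· + (j : ℕ)),
            (if (j : ℕ) ≤ m ∧ m - (j : ℕ) < Nm then
              aeval (wX F) (f (i, j) (m - (j : ℕ)) * X ^ (i : ℕ)
                * h ^ (j : ℕ)) * wY F ^ m else 0) := by
      symm
      apply Finset.sum_subset
      · intro m hm
        rw [Finset.mem_image] at hm
        obtain ⟨b, hb, rfl⟩ := hm
        rw [Finset.mem_range] at hb ⊢
        have := j.isLt
        omega
      · intro m _ hmIm
        split
        case isTrue hc =>
          exfalso
          apply hmIm
          rw [Finset.mem_image]
          exact ⟨m - (j : ℕ), Finset.mem_range.mpr hc.2, by omega⟩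
        case isFalse => rfl
    rw [step1, Finset.sum_image (fun a _ b _ hab => by omega)]
    rw [heq' (i, j), Finset.sum_mul]
    refine Finset.sum_congr rfl fun b hb => ?_
    have hcond : (j : ℕ) ≤ b + (j : ℕ) ∧ b + (j : ℕ) - (j : ℕ) < Nm := by
      constructor
      · omega
      · simpa using Finset.mem_range.mp hb
    rw [if_pos hcond]
    have hbj : b + (j : ℕ) - (j : ℕ) = b := by omega
    rw [hbj]
    by_cases hpb : p ∣ b
    · exact (term_shift p h (f (i, j) b) (i : ℕ) (j : ℕ) b hpb).symm
    · have hf0 : f (i, j) b = 0 := by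
        by_contra hne
        exact hpb (hprop (i, j) b hne).1
      rw [hf0]
      simp
  have key : ∀ m ∈ Finset.range (Nm + p), G m = 0 := by
    apply KI
    calc ∑ m ∈ Finset.range (Nm + p), aeval (wX F) (G m) * wY F ^ m
        = ∑ m ∈ Finset.range (Nm + p), ∑ ij : Fin p × Fin p,
            (if (ij.2 : ℕ) ≤ m ∧ m - (ij.2 : ℕ) < Nm then
              aeval (wX F) (f ij (m - (ij.2 : ℕ)) * X ^ (ij.1 : ℕ) * h ^ (ij.2 : ℕ))
                * wY F ^ m else 0) := by
          refine Finset.sum_congr rfl fun m _ => ?_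
          rw [hG]
          dsimp only
          rw [map_sum, Finset.sum_mul]
          refine Finset.sum_congr rfl fun ij _ => ?_
          split
          · rfl
          · rw [map_zero, zero_mul]
      _ = ∑ ij : Fin p × Fin p, ∑ m ∈ Finset.range (Nm + p),
            (if (ij.2 : ℕ) ≤ m ∧ m - (ij.2 : ℕ) < Nm then
              aeval (wX F) (f ij (m - (ij.2 : ℕ)) * X ^ (ij.1 : ℕ) * h ^ (ij.2 : ℕ))
                * wY F ^ m else 0) := Finset.sum_comm
      _ = ∑ ij : Fin p × Fin p, d ij *
            (wX F ^ (ij.1 : ℕ) * (aeval (wX F) h ^ (ij.2 : ℕ) * wY F ^ (ij.2 : ℕ))) :=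
          Finset.sum_congr rfl fun ij _ => inner ij
      _ = 0 := hsum
  -- extract vanishing of all the coefficient polynomials
  have hfzero : ∀ (i0 j0 : Fin p) (b0 : ℕ), b0 < Nm → f (i0, j0) b0 = 0 := by
    intro i0 j0 b0 hb0
    by_contra hne
    have hpb0 : p ∣ b0 := (hprop (i0, j0) b0 hne).1
    set m := b0 + (j0 : ℕ) with hm
    have hmmem : m ∈ Finset.range (Nm + p) := by
      rw [Finset.mem_range]
      have := j0.isLt
      omega
    have hGm := key m hmmem
    rw [hG] at hGm
    dsimp only at hGm
    rw [Fintype.sum_prod_type] at hGm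
    dsimp only at hGm
    have collapse : ∀ i : Fin p,
        (∑ j : Fin p, if (j : ℕ) ≤ m ∧ m - (j : ℕ) < Nm then
          f (i, j) (m - (j : ℕ)) * X ^ (i : ℕ) * h ^ (j : ℕ) else 0)
        = f (i, j0) b0 * X ^ (i : ℕ) * h ^ (j0 : ℕ) := by
      intro i
      rw [Finset.sum_eq_single j0]
      · have hb0e : m - (j0 : ℕ) = b0 := by omega
        have hcond : (j0 : ℕ) ≤ m ∧ m - (j0 : ℕ) < Nm := by
          constructor
          · omega
          · omega
        rw [if_pos hcond, hb0e]
      · intro j _ hj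
        split
        case isTrue hc =>
          by_cases hf : f (i, j) (m - (j : ℕ)) = 0
          · rw [hf, zero_mul, zero_mul]
          · exfalso
            apply hj
            apply Fin.ext
            exact mod_eq_helper p j.isLt j0.isLt hm hpb0 hc.1 (hprop (i, j) _ hf).1
        case isFalse => rfl
      · intro habs; exact absurd (Finset.mem_univ _) habs
    rw [Finset.sum_congr rfl fun i _ => collapse i, ← Finset.sum_mul] at hGm
    rcases mul_eq_zero.mp hGm with h1 | h2
    · have := residue_indep p (fun i => f (i, j0) b0) (fun i => by
        by_cases hf : f (i, j0) b0 = 0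
        · rw [hf]; exact derivative_zero
        · exact (hprop (i, j0) b0 hf).2) (by exact h1) i0
      exact hne this
    · exact absurd h2 (pow_ne_zero _ hh)
  intro ij
  rw [heq' ij]
  apply Finset.sum_eq_zero
  intro b hb
  rw [hfzero ij.1 ij.2 b (Finset.mem_range.mp hb), map_zero, zero_mul]

end WeylAux

/-- In characteristic `p > 0`, `A_h` is a free module over its center
`Z(A_h) = F[xᵖ, hᵖyᵖ]` with basis `{xⁱhʲyʲ : 0 ≤ i, j < p}`: every element of `A_h` has a
unique expression `∑_{i,j<p} z_{ij}·xⁱ·hʲ·yʲ` with each `z_{ij}` central in `A_h`. -/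
theorem stmt8 (F : Type) [Field F] (p : ℕ) [Fact p.Prime] [CharP F p]
    (h : F[X]) (hh : h ≠ 0) :
    ∀ a ∈ Ahsub F h, ∃! z : Fin p × Fin p → Weyl F,
      (∀ ij, z ij ∈ Ahsub F h ∧ ∀ b ∈ Ahsub F h, z ij * b = b * z ij) ∧
      a = ∑ ij : Fin p × Fin p,
            z ij * (wX F ^ (ij.1 : ℕ) * (aeval (wX F) h ^ (ij.2 : ℕ) * wY F ^ (ij.2 : ℕ))) := by
  intro a ha
  obtain ⟨z, hz, hsum⟩ := WeylAux.exists_decomp p h ha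
  refine ⟨z, ⟨fun ij => ⟨(hz ij).1, fun b _ => (hz ij).2 b⟩, hsum⟩, ?_⟩
  rintro z' ⟨hz', hsum'⟩
  funext ij
  have hdiff := WeylAux.unique_zero p h hh (fun ij => z' ij - z ij)
    (fun ij => sub_mem (hz' ij).1 (hz ij).1)
    (fun ij v hv => by rw [sub_mul, mul_sub, (hz' ij).2 v hv, (hz ij).2 v])
    (by
      rw [Finset.sum_congr rfl fun ij _ => sub_mul (z' ij) (z ij) _,
        Finset.sum_sub_distrib, ← hsum, ← hsum', sub_self])
  exact sub_eq_zero.mp (hdiff ij)
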